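/- Let k > 0, let n be a positive integer, and let a, b, α_1,…,α_n, β_1,…,β_n be real numbers with 0 < a ≤ b, α_i > 0, β_i > 0, and such that for all t ∈ [0,∞) and all i: at + α_i > 0, bt + β_i > 0, at + α_i ≤ bt + β_i, and ψ_k(at+α_i) > 0. Then the function X(t) = ∏_{i=1}^n Γ_k(at+α_i)/Γ_k(bt+β_i) is non-increasing on [0,∞). -/

import Mathlib

open Real

/-- The k-Gamma function `Γ_k(t) = ∫₀^∞ e^{-x^k/k} x^{t-1} dx`. -/
noncomputable def gammak (k t : ℝ) : ℝ :=
  ∫ x in Set.Ioi (0 : ℝ), Real.exp (-(x ^ k) / k) * x ^ (t - 1)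

/-- The k-digamma function, defined via its series representation
`ψ_k(t) = (ln k − γ)/k − 1/t + ∑_{n=1}^∞ t/(nk(nk+t))`. -/
noncomputable def psik (k t : ℝ) : ℝ :=
  (Real.log k - eulerMascheroniConstant) / k - 1 / t +
    ∑' n : ℕ, t / (((n : ℝ) + 1) * k * (((n : ℝ) + 1) * k + t))

/-!
Since `Γ_k(t) = k^(t/k - 1) Γ(t/k)`, the series `ψ_k` is the logarithmic derivative of `Γ_k` as
soon as the digamma function `ψ = (log Γ)'` has the partial-fraction expansion
`ψ(s) = -γ - 1/s + ∑ s/((n+1)(n+1+s))`. That expansion follows from `ψ(x+1) = ψ(x) + 1/x` and the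
squeeze `log x ≤ ψ(x+1) ≤ log(x+1)`, which is log-convexity of `Γ`. Each factor of `X` then has
logarithmic derivative `a ψ_k(at+α_i) - b ψ_k(bt+β_i) ≤ 0`, because `ψ_k` is increasing
(log-convexity again), `ψ_k(at+α_i) > 0` and `a ≤ b`.
-/

open Set Filter Topology

namespace Real

noncomputable def digamma (s : ℝ) : ℝ := deriv (log ∘ Gamma) s

variable {s x : ℝ}

lemma differentiableAt_log_Gamma (hx : 0 < x) : DifferentiableAt ℝ (log ∘ Gamma) x :=
  (differentiableAt_Gamma fun m => ((neg_nonpos.2 m.cast_nonneg).trans_lt hx).ne').log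
    (Gamma_pos_of_pos hx).ne'

lemma hasDerivAt_log_Gamma (hx : 0 < x) : HasDerivAt (log ∘ Gamma) (digamma x) x :=
  (differentiableAt_log_Gamma hx).hasDerivAt

lemma log_Gamma_add_one (hx : 0 < x) : (log ∘ Gamma) (x + 1) = (log ∘ Gamma) x + log x := by
  simp only [Function.comp_apply, Gamma_add_one hx.ne',
    log_mul hx.ne' (Gamma_pos_of_pos hx).ne', add_comm]

lemma digamma_one : digamma 1 = -eulerMascheroniConstant := by
  simpa [digamma, Function.comp_def] using (hasDerivAt_Gamma_one.log (by simp)).deriv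

lemma digamma_add_one (hx : 0 < x) : digamma (x + 1) = digamma x + x⁻¹ := by
  rw [digamma, digamma, ← deriv_comp_add_const, ← deriv_log,
    ← deriv_add (differentiableAt_log_Gamma hx) (differentiableAt_log hx.ne')]
  apply EventuallyEq.deriv_eq
  filter_upwards [eventually_gt_nhds hx] with y hy using log_Gamma_add_one hy

lemma digamma_add_nat (hs : 0 < s) (N : ℕ) :
    digamma (s + N) = digamma s + ∑ j ∈ Finset.range N, (s + j)⁻¹ := by
  induction N with
  | zero => simp
  | succ N ih =>
    rw [Nat.cast_succ, ← add_assoc, digamma_add_one (by positivity), ih, Finset.sum_range_succ,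
      add_assoc]

lemma digamma_monotoneOn : MonotoneOn digamma (Ioi 0) :=
  convexOn_log_Gamma.monotoneOn_deriv fun _ hx => differentiableAt_log_Gamma hx

lemma digamma_le_log (hx : 0 < x) : digamma x ≤ log x := by
  refine (convexOn_log_Gamma.deriv_le_slope hx (show 0 < x + 1 by linarith) (by linarith)
    (differentiableAt_log_Gamma hx)).trans_eq ?_
  rw [slope_def_field, log_Gamma_add_one hx]
  ring

lemma log_le_digamma_add_one (hx : 0 < x) : log x ≤ digamma (x + 1) := by
  refine (le_of_eq ?_).trans (convexOn_log_Gamma.slope_le_deriv hx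
    (show 0 < x + 1 by linarith) (by linarith) (differentiableAt_log_Gamma (by linarith)))
  rw [slope_def_field, log_Gamma_add_one hx]
  ring

lemma tendsto_digamma_sub_log : Tendsto (fun x => digamma x - log x) atTop (𝓝 0) := by
  refine tendsto_of_tendsto_of_tendsto_of_le_of_le' (tendsto_log_comp_add_sub_log (-1))
    tendsto_const_nhds ?_ ?_
  · filter_upwards [eventually_gt_atTop 1] with x hx
    have := log_le_digamma_add_one (show 0 < x + -1 by linarith)
    rw [neg_add_cancel_right] at this
    linarith
  · filter_upwards [eventually_gt_atTop 0] with x hx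
    linarith [digamma_le_log hx]

lemma tendsto_digamma_add_sub_digamma (s : ℝ) :
    Tendsto (fun x => digamma (x + s) - digamma x) atTop (𝓝 0) := by
  have h := ((tendsto_digamma_sub_log.comp (tendsto_atTop_add_const_right _ s tendsto_id)).sub
    tendsto_digamma_sub_log).add (tendsto_log_comp_add_sub_log s)
  simp only [sub_zero, add_zero] at h
  refine h.congr fun x => ?_
  simp only [Function.comp_apply, id]
  ring

lemma hasSum_digamma (hs : 0 < s) :
    HasSum (fun n : ℕ => s / ((n + 1) * (n + 1 + s)))
      (digamma s + eulerMascheroniConstant + s⁻¹) := by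
  rw [hasSum_iff_tendsto_nat_of_nonneg (fun n => by positivity)]
  have hterm (n : ℕ) : s / ((n + 1) * (n + 1 + s)) = (1 + (n : ℝ))⁻¹ - (s + (n + 1))⁻¹ := by
    field_simp
    ring
  have hpartial (N : ℕ) : ∑ n ∈ Finset.range N, s / ((n + 1) * (n + 1 + s)) =
      digamma s + eulerMascheroniConstant + s⁻¹ - (digamma (s + (N + 1)) - digamma (N + 1)) := by
    have h1 := digamma_add_nat one_pos N
    have h2 := digamma_add_nat hs (N + 1)
    rw [add_comm (1 : ℝ), digamma_one] at h1
    rw [Finset.sum_range_succ'] at h2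
    push_cast [add_zero] at h2
    rw [Finset.sum_congr rfl fun n _ => hterm n, Finset.sum_sub_distrib]
    linarith
  simp only [hpartial]
  simpa [add_comm s] using tendsto_const_nhds.sub ((tendsto_digamma_add_sub_digamma s).comp
    (tendsto_atTop_add_const_right _ 1 tendsto_natCast_atTop_atTop))

end Real

section KGamma

variable {k t : ℝ}

lemma gammak_eq_rpow_mul_Gamma (hk : 0 < k) (ht : 0 < t) :
    gammak k t = k ^ (t / k - 1) * Gamma (t / k) := by
  have h := integral_rpow_mul_exp_neg_mul_rpow hk (show -1 < t - 1 by linarith) (inv_pos.2 hk)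
  rw [sub_add_cancel, inv_rpow hk.le, ← rpow_neg hk.le, neg_div, neg_neg, one_div] at h
  rw [gammak, rpow_sub_one hk.ne', div_eq_mul_inv, ← h]
  congr 1
  funext x
  rw [mul_comm, neg_mul, ← div_eq_inv_mul, neg_div]

lemma gammak_pos (hk : 0 < k) (ht : 0 < t) : 0 < gammak k t := by
  rw [gammak_eq_rpow_mul_Gamma hk ht]
  exact mul_pos (rpow_pos_of_pos hk _) (Gamma_pos_of_pos (div_pos ht hk))

lemma psik_eq_digamma (hk : 0 < k) (ht : 0 < t) :
    psik k t = (log k + digamma (t / k)) / k := by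
  have h : HasSum (fun n : ℕ => t / ((n + 1) * k * ((n + 1) * k + t)))
      (k⁻¹ * (digamma (t / k) + eulerMascheroniConstant + (t / k)⁻¹)) := by
    have hterm (n : ℕ) : k⁻¹ * (t / k / ((n + 1) * (n + 1 + t / k))) =
        t / ((n + 1) * k * ((n + 1) * k + t)) := by
      field_simp
    simpa only [hterm] using (hasSum_digamma (div_pos ht hk)).mul_left k⁻¹
  rw [psik, h.tsum_eq]
  field_simp
  ring

lemma psik_monotoneOn (hk : 0 < k) : MonotoneOn (psik k) (Ioi 0) := by
  intro s hs t ht hst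
  rw [psik_eq_digamma hk hs, psik_eq_digamma hk ht]
  gcongr
  exact digamma_monotoneOn (div_pos hs hk) (div_pos ht hk) (by gcongr)

lemma hasDerivAt_log_gammak (hk : 0 < k) (ht : 0 < t) :
    HasDerivAt (fun t => log (gammak k t)) (psik k t) t := by
  have hlin : HasDerivAt (fun t : ℝ => t / k) k⁻¹ t := by
    simpa using (hasDerivAt_id t).div_const k
  have h := ((hlin.sub_const 1).mul_const (log k)).add
    ((hasDerivAt_log_Gamma (div_pos ht hk)).comp t hlin)
  rw [psik_eq_digamma hk ht]
  refine (h.congr_of_eventuallyEq ?_).congr_deriv (by ring)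
  filter_upwards [eventually_gt_nhds ht] with u hu
  rw [gammak_eq_rpow_mul_Gamma hk hu, log_mul (rpow_pos_of_pos hk _).ne'
    (Gamma_pos_of_pos (div_pos hu hk)).ne', log_rpow hk]
  rfl

lemma antitoneOn_gammak_div_gammak {a b α β : ℝ} {D : Set ℝ} (hk : 0 < k) (hD : Convex ℝ D)
    (ha : 0 ≤ a) (hab : a ≤ b)
    (h : ∀ t ∈ D, 0 < a * t + α ∧ 0 < b * t + β ∧ a * t + α ≤ b * t + β ∧
      0 ≤ psik k (a * t + α)) :
    AntitoneOn (fun t => gammak k (a * t + α) / gammak k (b * t + β)) D := by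
  have hderiv (t : ℝ) (ht : t ∈ D) :
      HasDerivAt (fun t => log (gammak k (a * t + α)) - log (gammak k (b * t + β)))
        (psik k (a * t + α) * a - psik k (b * t + β) * b) t := by
    have hlin (c d : ℝ) : HasDerivAt (fun t => c * t + d) c t := by
      simpa using ((hasDerivAt_id t).const_mul c).add_const d
    obtain ⟨hx, hy, -, -⟩ := h t ht
    exact ((hasDerivAt_log_gammak hk hx).comp t (hlin a α)).sub
      ((hasDerivAt_log_gammak hk hy).comp t (hlin b β))
  have hlog : AntitoneOn
      (fun t => log (gammak k (a * t + α)) - log (gammak k (b * t + β))) D := by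
    refine antitoneOn_of_deriv_nonpos hD
      (fun t ht => (hderiv t ht).continuousAt.continuousWithinAt)
      (fun t ht => (hderiv t (interior_subset ht)).differentiableAt.differentiableWithinAt)
      fun t ht => ?_
    obtain ⟨hx, hy, hxy, hψ⟩ := h t (interior_subset ht)
    rw [(hderiv t (interior_subset ht)).deriv, sub_nonpos]
    calc psik k (a * t + α) * a ≤ psik k (a * t + α) * b := by gcongr
      _ ≤ psik k (b * t + β) * b := by
        gcongr
        · linarith
        · exact psik_monotoneOn hk hx hy hxy
  refine (exp_monotone.comp_antitoneOn hlog).congr fun t ht => ?_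
  obtain ⟨hx, hy, -, -⟩ := h t ht
  simp only [Function.comp_apply, exp_sub, exp_log (gammak_pos hk hx), exp_log (gammak_pos hk hy)]

end KGamma

theorem X_antitone_general (k : ℝ) (hk : 0 < k) (n : ℕ)
    (a b : ℝ) (α β : Fin n → ℝ) (ha : 0 < a) (hab : a ≤ b)
    (h : ∀ t : ℝ, 0 ≤ t → ∀ i, 0 < a * t + α i ∧ 0 < b * t + β i ∧
      a * t + α i ≤ b * t + β i ∧ 0 < psik k (a * t + α i)) :
    AntitoneOn (fun t : ℝ => ∏ i, gammak k (a * t + α i) / gammak k (b * t + β i))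
      (Set.Ici 0) := by
  have hfactor (i : Fin n) :
      AntitoneOn (fun t => gammak k (a * t + α i) / gammak k (b * t + β i)) (Ici 0) :=
    antitoneOn_gammak_div_gammak hk (convex_Ici 0) ha.le hab fun t ht =>
      have ⟨hx, hy, hxy, hψ⟩ := h t ht i
      ⟨hx, hy, hxy, hψ.le⟩
  intro s hs t ht hst
  refine Finset.prod_le_prod (fun i _ => ?_) fun i _ => hfactor i hs ht hst
  exact (div_pos (gammak_pos hk (h t ht i).1) (gammak_pos hk (h t ht i).2.1)).le

theorem X_antitone (k : ℝ) (hk : 0 < k) (n : ℕ) (hn : 0 < n)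
    (a b : ℝ) (α β : Fin n → ℝ) (ha : 0 < a) (hab : a ≤ b)
    (hα : ∀ i, 0 < α i) (hβ : ∀ i, 0 < β i)
    (h : ∀ t : ℝ, 0 ≤ t → ∀ i, 0 < a * t + α i ∧ 0 < b * t + β i ∧
      a * t + α i ≤ b * t + β i ∧ 0 < psik k (a * t + α i)) :
    AntitoneOn (fun t : ℝ => ∏ i, gammak k (a * t + α i) / gammak k (b * t + β i))
      (Set.Ici 0) :=
  X_antitone_general k hk n a b α β ha hab h
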